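/- Combining the previous two facts: if f(x) = Σ_{k∈B}[b_k cos(k·x) + c_k sin(k·x)] with the orthogonality conditions, and each of sin(k·x), cos(k·x) is approximated to sup error ε by g_k, h_k respectively, then ‖Σ_{k∈B}(b_k h_k + c_k g_k) − f‖_{∞,[-π,π]^d} ≤ ε · √(2N) · (2/(2π)^d)^{1/2} · ‖f‖_{L²([-π,π]^d)}. -/

import Mathlib

open MeasureTheory

open Real

namespace Stmt7Aux

variable {d : ℕ}

noncomputable def th (k : Fin d → ℤ) (x : Fin d → ℝ) : ℝ := ∑ i, (k i : ℝ) * x i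

def box (d : ℕ) : Set (Fin d → ℝ) := Set.univ.pi fun _ : Fin d => Set.Icc (-π) π

lemma th_cont (k : Fin d → ℤ) : Continuous (th k) :=
  continuous_finset_sum _ fun i _ => continuous_const.mul (continuous_apply i)

lemma box_compact : IsCompact (box d) := isCompact_univ_pi fun _ => isCompact_Icc

lemma box_meas : MeasurableSet (box d) := MeasurableSet.univ_pi fun _ => measurableSet_Icc

lemma integrableOn_box {E : Type*} [NormedAddCommGroup E] {F : (Fin d → ℝ) → E}
    (hF : Continuous F) : IntegrableOn F (box d) volume :=
  hF.locallyIntegrable.integrableOn_isCompact box_compact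

lemma th_sub (k l : Fin d → ℤ) (x : Fin d → ℝ) : th (k - l) x = th k x - th l x := by
  simp only [th, Pi.sub_apply, Int.cast_sub, sub_mul, Finset.sum_sub_distrib]

lemma th_add (k l : Fin d → ℤ) (x : Fin d → ℝ) : th (k + l) x = th k x + th l x := by
  simp only [th, Pi.add_apply, Int.cast_add, add_mul, Finset.sum_add_distrib]

lemma th_zero (x : Fin d → ℝ) : th (0 : Fin d → ℤ) x = 0 := by simp [th]

lemma integral_exp_box (m : Fin d → ℤ) (hm : m ≠ 0) :
    ∫ x in box d, Complex.exp ((th m x : ℂ) * Complex.I) = 0 := by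
  have h1 : ∀ x : Fin d → ℝ, Complex.exp ((th m x : ℂ) * Complex.I)
      = ∏ i, Complex.exp ((((m i : ℝ) * x i : ℝ) : ℂ) * Complex.I) := by
    intro x
    rw [← Complex.exp_sum]
    congr 1
    rw [← Finset.sum_mul]
    congr 1
    simp [th]
  set F : Fin d → ℝ → ℂ := fun i t => Complex.exp ((((m i : ℝ) * t : ℝ) : ℂ) * Complex.I) with hF
  have h2 : (box d).indicator (fun x : Fin d → ℝ => ∏ i, F i (x i))
      = fun x : Fin d → ℝ => ∏ i, (Set.Icc (-π) π).indicator (F i) (x i) := by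
    funext x
    by_cases hx : x ∈ box d
    · rw [Set.indicator_of_mem hx]
      exact Finset.prod_congr rfl fun i _ =>
        (Set.indicator_of_mem (hx i (Set.mem_univ i)) _).symm
    · rw [Set.indicator_of_notMem hx]
      obtain ⟨i, hi⟩ := not_forall.1 fun hall => hx fun i _ => hall i
      exact (Finset.prod_eq_zero (Finset.mem_univ i)
        (Set.indicator_of_notMem hi _)).symm
  obtain ⟨j, hj⟩ : ∃ j, m j ≠ 0 := by
    by_contra hc
    push_neg at hc
    exact hm (funext hc)
  calc ∫ x in box d, Complex.exp ((th m x : ℂ) * Complex.I)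
      = ∫ x in box d, ∏ i, F i (x i) := by simp_rw [h1]; rfl
    _ = ∫ x : Fin d → ℝ, (box d).indicator (fun x => ∏ i, F i (x i)) x := by
        rw [integral_indicator box_meas]
    _ = ∫ x : Fin d → ℝ, ∏ i, (Set.Icc (-π) π).indicator (F i) (x i) := by rw [h2]
    _ = ∏ i, ∫ t : ℝ, (Set.Icc (-π) π).indicator (F i) t :=
        integral_fintype_prod_eq_prod _
    _ = 0 := by
        apply Finset.prod_eq_zero (Finset.mem_univ j)
        rw [integral_indicator measurableSet_Icc, integral_Icc_eq_integral_Ioc,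
          ← intervalIntegral.integral_of_le (by linarith [pi_pos] : -π ≤ π)]
        have hc : ((m j : ℂ) * Complex.I) ≠ 0 :=
          mul_ne_zero (Int.cast_ne_zero.2 hj) Complex.I_ne_zero
        have : ∀ t : ℝ, F j t = Complex.exp (((m j : ℂ) * Complex.I) * (t : ℂ)) := by
          intro t; rw [hF]; norm_num; congr 1; ring
        simp_rw [this]
        rw [integral_exp_mul_complex hc]
        have e1 : (m j : ℂ) * Complex.I * (π : ℂ) = (((m j : ℝ) * π : ℝ) : ℂ) * Complex.I := by
          push_cast; ring
        have e2 : (m j : ℂ) * Complex.I * ((-π : ℝ) : ℂ)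
            = (-(((m j : ℝ) * π : ℝ) : ℂ)) * Complex.I := by push_cast; ring
        have hs : Complex.sin (((m j : ℝ) * π : ℝ) : ℂ) = 0 := by
          rw [← Complex.ofReal_sin, Real.sin_int_mul_pi]
          simp
        rw [e1, e2, Complex.exp_mul_I, Complex.exp_mul_I, Complex.cos_neg, Complex.sin_neg, hs]
        ring

lemma my_integral_ofReal {X : Type*} [MeasurableSpace X] (μ : Measure X) (f : X → ℝ) :
    ∫ x, ((f x : ℝ) : ℂ) ∂μ = ((∫ x, f x ∂μ : ℝ) : ℂ) :=
  integral_ofReal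

lemma integral_cos_sin_box (m : Fin d → ℤ) (hm : m ≠ 0) :
    (∫ x in box d, Real.cos (th m x)) = 0 ∧ (∫ x in box d, Real.sin (th m x)) = 0 := by
  have h0 := integral_exp_box m hm
  have h1 : ∀ x : Fin d → ℝ, Complex.exp ((th m x : ℂ) * Complex.I)
      = ((Real.cos (th m x) : ℝ) : ℂ) + ((Real.sin (th m x) : ℝ) : ℂ) * Complex.I := by
    intro x
    rw [Complex.exp_mul_I, Complex.ofReal_cos, Complex.ofReal_sin]
  simp_rw [h1] at h0
  have hic : IntegrableOn (fun x : Fin d → ℝ => ((Real.cos (th m x) : ℝ) : ℂ)) (box d) volume :=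
    integrableOn_box (Complex.continuous_ofReal.comp (Real.continuous_cos.comp (th_cont m)))
  have his : IntegrableOn (fun x : Fin d → ℝ => ((Real.sin (th m x) : ℝ) : ℂ) * Complex.I)
      (box d) volume :=
    integrableOn_box ((Complex.continuous_ofReal.comp
      (Real.continuous_sin.comp (th_cont m))).mul continuous_const)
  rw [integral_add hic his, integral_mul_const, my_integral_ofReal,
    my_integral_ofReal] at h0
  rw [Complex.ext_iff] at h0
  simpa using h0

lemma measure_box : (volume (box d)).toReal = (2 * π) ^ d := by
  rw [box, volume_pi_pi]
  simp only [Real.volume_Icc]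
  rw [Finset.prod_const, Finset.card_univ, Fintype.card_fin]
  have h2 : π - -π = 2 * π := by ring
  rw [h2, ← ENNReal.ofReal_pow (by positivity : (0:ℝ) ≤ 2 * π),
    ENNReal.toReal_ofReal (by positivity)]



lemma integral_one_box : (∫ _x in box d, (1:ℝ)) = (2*π)^d := by
  rw [integral_const, measureReal_restrict_apply_univ, measureReal_def, measure_box, smul_eq_mul, mul_one]

noncomputable def u (b c : (Fin d → ℤ) → ℝ) (k : Fin d → ℤ) (x : Fin d → ℝ) : ℝ :=
  b k * Real.cos (th k x) + c k * Real.sin (th k x)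

lemma u_cont (b c : (Fin d → ℤ) → ℝ) (k : Fin d → ℤ) : Continuous (u b c k) :=
  (continuous_const.mul (Real.continuous_cos.comp (th_cont k))).add
    (continuous_const.mul (Real.continuous_sin.comp (th_cont k)))

lemma int_cos (m : Fin d → ℤ) :
    IntegrableOn (fun x : Fin d → ℝ => Real.cos (th m x)) (box d) volume :=
  integrableOn_box (Real.continuous_cos.comp (th_cont m))

lemma int_sin (m : Fin d → ℤ) :
    IntegrableOn (fun x : Fin d → ℝ => Real.sin (th m x)) (box d) volume :=
  integrableOn_box (Real.continuous_sin.comp (th_cont m))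

lemma integral_mul_eq (b c : (Fin d → ℤ) → ℝ) (k l : Fin d → ℤ) :
    (∫ x in box d, u b c k x * u b c l x)
    = (b k * b l + c k * c l)/2 * (∫ x in box d, Real.cos (th (k - l) x))
      + (b k * b l - c k * c l)/2 * (∫ x in box d, Real.cos (th (k + l) x))
      + (b k * c l + c k * b l)/2 * (∫ x in box d, Real.sin (th (k + l) x))
      + (c k * b l - b k * c l)/2 * (∫ x in box d, Real.sin (th (k - l) x)) := by
  have hpt : ∀ x : Fin d → ℝ, u b c k x * u b c l x
      = (b k * b l + c k * c l)/2 * Real.cos (th (k - l) x)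
      + (b k * b l - c k * c l)/2 * Real.cos (th (k + l) x)
      + (b k * c l + c k * b l)/2 * Real.sin (th (k + l) x)
      + (c k * b l - b k * c l)/2 * Real.sin (th (k - l) x) := by
    intro x
    rw [u, u, th_sub, th_add, Real.cos_sub, Real.cos_add, Real.sin_add, Real.sin_sub]
    ring
  have i1 := (int_cos (d := d) (k - l)).const_mul ((b k * b l + c k * c l)/2)
  have i2 := (int_cos (d := d) (k + l)).const_mul ((b k * b l - c k * c l)/2)
  have i3 := (int_sin (d := d) (k + l)).const_mul ((b k * c l + c k * b l)/2)
  have i4 := (int_sin (d := d) (k - l)).const_mul ((c k * b l - b k * c l)/2)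
  simp_rw [hpt]
  have i12 : Integrable (fun x : Fin d → ℝ =>
      (b k * b l + c k * c l)/2 * Real.cos (th (k - l) x)
      + (b k * b l - c k * c l)/2 * Real.cos (th (k + l) x)) (volume.restrict (box d)) :=
    i1.add i2
  have i123 : Integrable (fun x : Fin d → ℝ =>
      (b k * b l + c k * c l)/2 * Real.cos (th (k - l) x)
      + (b k * b l - c k * c l)/2 * Real.cos (th (k + l) x)
      + (b k * c l + c k * b l)/2 * Real.sin (th (k + l) x)) (volume.restrict (box d)) :=
    i12.add i3
  rw [integral_add i123 i4, integral_add i12 i3, integral_add i1 i2,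
    integral_const_mul, integral_const_mul, integral_const_mul, integral_const_mul]

lemma integral_uu_cross (b c : (Fin d → ℤ) → ℝ) (k l : Fin d → ℤ)
    (hkl : k - l ≠ 0) (hkl' : k + l ≠ 0) :
    (∫ x in box d, u b c k x * u b c l x) = 0 := by
  rw [integral_mul_eq, (integral_cos_sin_box _ hkl).1, (integral_cos_sin_box _ hkl').1,
    (integral_cos_sin_box _ hkl').2, (integral_cos_sin_box _ hkl).2]
  ring

lemma integral_uu_diag (b c : (Fin d → ℤ) → ℝ) (k : Fin d → ℤ) (hk : k ≠ 0) :
    (∫ x in box d, u b c k x * u b c k x) = (2*π)^d / 2 * (b k^2 + c k^2) := by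
  have h2k : k + k ≠ 0 := by
    intro hc
    apply hk
    funext i
    have := congrFun hc i
    simp only [Pi.add_apply, Pi.zero_apply] at this ⊢
    omega
  rw [integral_mul_eq, sub_self, (integral_cos_sin_box _ h2k).1,
    (integral_cos_sin_box _ h2k).2]
  have e1 : (∫ x in box d, Real.cos (th (0 : Fin d → ℤ) x)) = (2*π)^d := by
    simp only [th_zero, Real.cos_zero]
    exact integral_one_box
  have e2 : (∫ x in box d, Real.sin (th (0 : Fin d → ℤ) x)) = 0 := by
    simp [th_zero]
  rw [e1, e2]
  ring

lemma integral_f_sq (B : Finset (Fin d → ℤ)) (h0 : (0 : Fin d → ℤ) ∉ B)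
    (hopp : ∀ k ∈ B, -k ∉ B) (b c : (Fin d → ℤ) → ℝ) (f : (Fin d → ℝ) → ℝ)
    (hf : ∀ x, f x = ∑ k ∈ B, u b c k x) :
    (∫ x in box d, (f x)^2) = (2*π)^d / 2 * ∑ k ∈ B, (b k^2 + c k^2) := by
  have hfsq : ∀ x : Fin d → ℝ, (f x)^2 = ∑ k ∈ B, ∑ l ∈ B, u b c k x * u b c l x := by
    intro x
    rw [hf, sq, Finset.sum_mul_sum]
  simp_rw [hfsq]
  rw [integral_finset_sum B (f := fun k x => ∑ l ∈ B, u b c k x * u b c l x) fun k _ => integrableOn_box <| continuous_finset_sum B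
    fun l _ => (u_cont b c k).mul (u_cont b c l)]
  have hterm : ∀ k ∈ B, (∫ x in box d, ∑ l ∈ B, u b c k x * u b c l x)
      = (2*π)^d / 2 * (b k^2 + c k^2) := by
    intro k hk
    rw [integral_finset_sum B (f := fun l x => u b c k x * u b c l x) fun l _ => integrableOn_box ((u_cont b c k).mul (u_cont b c l))]
    rw [Finset.sum_eq_single_of_mem k hk]
    · exact integral_uu_diag b c k (fun hc => h0 (hc ▸ hk))
    · intro l hl hne
      apply integral_uu_cross
      · exact sub_ne_zero.2 (Ne.symm hne)
      · intro hc
        exact hopp l hl (eq_neg_of_add_eq_zero_left hc ▸ hk)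
  rw [Finset.sum_congr rfl hterm, ← Finset.mul_sum]

end Stmt7Aux

open Stmt7Aux in
/-- Combination of Cauchy–Schwarz and orthogonality: if `f = Σ_{k∈B} [b_k cos(k·x) + c_k sin(k·x)]`
with `B ⊂ ℤ^d \ {0}` finite of size `N` containing no opposite pairs, and `g_k, h_k` approximate
`sin(k·x), cos(k·x)` to uniform error `ε` on `[-π,π]^d`, then
`‖Σ (b_k h_k + c_k g_k) − f‖_{∞,[-π,π]^d} ≤ ε √(2N) (2/(2π)^d)^{1/2} ‖f‖_{L²([-π,π]^d)}`. -/
theorem stmt7 {d : ℕ} (B : Finset (Fin d → ℤ)) (N : ℕ) (hN : B.card = N)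
    (h0 : (0 : Fin d → ℤ) ∉ B) (hopp : ∀ k ∈ B, -k ∉ B)
    (b c : (Fin d → ℤ) → ℝ) (g h : (Fin d → ℤ) → (Fin d → ℝ) → ℝ)
    (ε : ℝ) (hε : 0 < ε)
    (hg : ∀ k ∈ B, ∀ x : Fin d → ℝ, (∀ i, |x i| ≤ Real.pi) →
      |g k x - Real.sin (∑ i, (k i : ℝ) * x i)| ≤ ε)
    (hh : ∀ k ∈ B, ∀ x : Fin d → ℝ, (∀ i, |x i| ≤ Real.pi) →
      |h k x - Real.cos (∑ i, (k i : ℝ) * x i)| ≤ ε)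
    (f fnet : (Fin d → ℝ) → ℝ)
    (hf : ∀ x, f x = ∑ k ∈ B,
      (b k * Real.cos (∑ i, (k i : ℝ) * x i) + c k * Real.sin (∑ i, (k i : ℝ) * x i)))
    (hfnet : ∀ x, fnet x = ∑ k ∈ B, (b k * h k x + c k * g k x)) :
    ∀ x : Fin d → ℝ, (∀ i, |x i| ≤ Real.pi) →
      |fnet x - f x| ≤ ε * Real.sqrt (2 * N) * Real.sqrt (2 / (2 * Real.pi) ^ d) *
        Real.sqrt (∫ x in Set.univ.pi fun _ : Fin d => Set.Icc (-Real.pi) Real.pi, (f x) ^ 2) := by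
  intro x hx
  set S := ∑ k ∈ B, (b k ^ 2 + c k ^ 2) with hS
  have hS0 : (0:ℝ) ≤ S := Finset.sum_nonneg fun k _ => by positivity
  have hπ : (0:ℝ) < (2 * π) ^ d := by positivity
  -- value of the L² norm squared
  have hIf : (∫ y in box d, (f y)^2) = (2*π)^d / 2 * S := by
    refine integral_f_sq B h0 hopp b c f fun y => ?_
    rw [hf y]
    rfl
  have hbox : (Set.univ.pi fun _ : Fin d => Set.Icc (-Real.pi) Real.pi) = box d := rfl
  -- step 1: pointwise bound
  have h1 : |fnet x - f x| ≤ ε * ∑ k ∈ B, (|b k| + |c k|) := by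
    rw [hfnet, hf, ← Finset.sum_sub_distrib, Finset.mul_sum]
    refine (Finset.abs_sum_le_sum_abs _ _).trans (Finset.sum_le_sum fun k hk => ?_)
    have e : b k * h k x + c k * g k x -
        (b k * Real.cos (∑ i, (k i : ℝ) * x i) + c k * Real.sin (∑ i, (k i : ℝ) * x i))
        = b k * (h k x - Real.cos (∑ i, (k i : ℝ) * x i))
          + c k * (g k x - Real.sin (∑ i, (k i : ℝ) * x i)) := by ring
    rw [e]
    calc |b k * (h k x - Real.cos (∑ i, (k i : ℝ) * x i))
          + c k * (g k x - Real.sin (∑ i, (k i : ℝ) * x i))|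
        ≤ |b k| * |h k x - Real.cos (∑ i, (k i : ℝ) * x i)|
          + |c k| * |g k x - Real.sin (∑ i, (k i : ℝ) * x i)| := by
          refine (abs_add_le _ _).trans ?_
          rw [abs_mul, abs_mul]
      _ ≤ |b k| * ε + |c k| * ε := add_le_add
          (mul_le_mul_of_nonneg_left (hh k hk x hx) (abs_nonneg _))
          (mul_le_mul_of_nonneg_left (hg k hk x hx) (abs_nonneg _))
      _ = ε * (|b k| + |c k|) := by ring
  -- step 2: Cauchy–Schwarz
  have h2 : (∑ k ∈ B, (|b k| + |c k|)) ≤ Real.sqrt (2 * N * S) := by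
    have hsum0 : (0:ℝ) ≤ ∑ k ∈ B, (|b k| + |c k|) :=
      Finset.sum_nonneg fun k _ => by positivity
    have hsq : (∑ k ∈ B, (|b k| + |c k|))^2 ≤ 2 * N * S := by
      calc (∑ k ∈ B, (|b k| + |c k|))^2
          ≤ B.card * ∑ k ∈ B, (|b k| + |c k|)^2 := sq_sum_le_card_mul_sum_sq
        _ ≤ N * ∑ k ∈ B, 2 * (b k^2 + c k^2) := by
            rw [hN]
            refine mul_le_mul_of_nonneg_left (Finset.sum_le_sum fun k _ => ?_) (by positivity)
            nlinarith [sq_abs (b k), sq_abs (c k), abs_nonneg (b k), abs_nonneg (c k),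
              mul_nonneg (abs_nonneg (b k)) (abs_nonneg (c k)), sq_nonneg (|b k| - |c k|)]
        _ = 2 * N * S := by rw [← Finset.mul_sum]; ring
    have := Real.sqrt_le_sqrt hsq
    rwa [Real.sqrt_sq hsum0] at this
  -- step 3: rewrite the RHS
  have h3 : ε * Real.sqrt (2 * N) * Real.sqrt (2 / (2 * Real.pi) ^ d) *
      Real.sqrt (∫ y in Set.univ.pi fun _ : Fin d => Set.Icc (-Real.pi) Real.pi, (f y) ^ 2)
      = ε * Real.sqrt (2 * N * S) := by
    rw [hbox, hIf]
    have e : Real.sqrt (2 * (N:ℝ)) * Real.sqrt (2 / (2*π)^d) * Real.sqrt ((2*π)^d/2 * S)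
        = Real.sqrt (2 * N * S) := by
      rw [← Real.sqrt_mul (by positivity), ← Real.sqrt_mul (by positivity)]
      congr 1
      field_simp
    calc ε * Real.sqrt (2 * (N:ℝ)) * Real.sqrt (2 / (2*π)^d) * Real.sqrt ((2*π)^d/2 * S)
        = ε * (Real.sqrt (2 * (N:ℝ)) * Real.sqrt (2 / (2*π)^d)
            * Real.sqrt ((2*π)^d/2 * S)) := by ring
      _ = ε * Real.sqrt (2 * N * S) := by rw [e]
  rw [h3]
  exact h1.trans (mul_le_mul_of_nonneg_left h2 hε.le)
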